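/- In the 3-graph construction based on a projective plane of order r−2 (r ≥ 3 with r−2 a prime power or 0) on n vertices, every tight component meets at most (r−1)·⌈n/(r²−3r+3)⌉ vertices; in particular if (r²−3r+3) divides n, every tight component meets at most (r−1)n/(r²−3r+3) vertices. -/
import Mathlib


open Finset

/-- Two edges are in the same tight component of the `3`-uniform hypergraph with edge
set `E` iff they are related by the reflexive-transitive closure of the relation
"both are edges and they share exactly 2 vertices". -/
def TightRel {V : Type*} [DecidableEq V] (E : Finset (Finset V)) :
    Finset V → Finset V → Prop :=
  Relation.ReflTransGen (fun e f => e ∈ E ∧ f ∈ E ∧ (e ∩ f).card = 2)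

/-- A family `L` of finsets is a projective plane of order `s`, viewed as an
`(s+1)`-uniform hypergraph. -/
def IsProjectivePlane {I : Type*} [DecidableEq I] (L : Finset (Finset I)) (s : ℕ) : Prop :=
  L.card = s ^ 2 + s + 1 ∧
  (L.biUnion id).card = s ^ 2 + s + 1 ∧
  (∀ l ∈ L, l.card = s + 1) ∧
  (∀ p ∈ L.biUnion id, (L.filter (fun l => p ∈ l)).card = s + 1) ∧
  (∀ p q, p ∈ L.biUnion id → q ∈ L.biUnion id → p ≠ q →
    ∃! l, l ∈ L ∧ p ∈ l ∧ q ∈ l) ∧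
  (∀ l m, l ∈ L → m ∈ L → l ≠ m → ∃! p, p ∈ l ∧ p ∈ m)

/-- In the 3-graph construction based on a projective plane of order `r-2`:
the `n` vertices are partitioned into classes `C_i` indexed by the points of the plane,
each of size at most `⌈n/(r²-3r+3)⌉`; each pair of distinct vertices is coloured by a
line containing the points of both their classes; the edges are the monochromatic
triangles.  Then every tight component meets at most `(r-1)·⌈n/(r²-3r+3)⌉` vertices,
and if `r²-3r+3` divides `n`, at most `(r-1)·n/(r²-3r+3)` vertices. -/
theorem stmt18 {V I : Type*} [Fintype V] [Fintype I] [DecidableEq V] [DecidableEq I]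
    (r : ℕ) (hr : 3 ≤ r)
    (L : Finset (Finset I)) (hP : IsProjectivePlane L (r - 2))
    (hIcard : Fintype.card I = r ^ 2 - 3 * r + 3)
    (hpts : L.biUnion id = Finset.univ)
    (C : V → I)
    (hC : ∀ i : I, (Finset.univ.filter (fun v => C v = i)).card ≤
      (Fintype.card V + (r ^ 2 - 3 * r + 3) - 1) / (r ^ 2 - 3 * r + 3))
    (col : V → V → Finset I)
    (hsym : ∀ u v : V, col u v = col v u)
    (hcol : ∀ u v : V, u ≠ v → col u v ∈ L ∧ C u ∈ col u v ∧ C v ∈ col u v)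
    (E : Finset (Finset V))
    (hE : ∀ e : Finset V, e ∈ E ↔ ∃ u v w : V, u ≠ v ∧ u ≠ w ∧ v ≠ w ∧
      e = {u, v, w} ∧ col u v = col u w ∧ col u w = col v w) :
    ∀ e₀ ∈ E,
      {x : V | ∃ e ∈ E, TightRel E e₀ e ∧ x ∈ e}.ncard ≤
        (r - 1) * ((Fintype.card V + (r ^ 2 - 3 * r + 3) - 1) / (r ^ 2 - 3 * r + 3)) ∧
      ((r ^ 2 - 3 * r + 3) ∣ Fintype.card V →
        {x : V | ∃ e ∈ E, TightRel E e₀ e ∧ x ∈ e}.ncard ≤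
          (r - 1) * (Fintype.card V / (r ^ 2 - 3 * r + 3))) := by

  intro e₀ he₀
  classical
  set m := r ^ 2 - 3 * r + 3 with hm
  have hm3 : 3 ≤ m := by
    have h3r : 3 * r ≤ r ^ 2 := by nlinarith
    omega
  obtain ⟨u₀, v₀, w₀, huv₀, huw₀, hvw₀, he₀eq, h1₀, h2₀⟩ := (hE e₀).1 he₀
  set l₀ := col u₀ v₀ with hl₀
  have keylem : ∀ e ∈ E, ∀ a ∈ e, ∀ b ∈ e, ∀ a' ∈ e, ∀ b' ∈ e,
      a ≠ b → a' ≠ b' → col a b = col a' b' := by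
    intro e heE
    obtain ⟨u, v, w, huv, huw, hvw, heq, h1, h2⟩ := (hE e).1 heE
    subst heq
    have base : ∀ a ∈ ({u, v, w} : Finset V), ∀ b ∈ ({u, v, w} : Finset V),
        a ≠ b → col a b = col u v := by
      intro a ha b hb hab
      simp only [Finset.mem_insert, Finset.mem_singleton] at ha hb
      rcases ha with rfl | rfl | rfl <;> rcases hb with rfl | rfl | rfl <;>
        first
          | exact absurd rfl hab
          | exact rfl
          | exact h1.symm
          | exact hsym _ _
          | exact (h1.trans h2).symm
          | exact (hsym _ _).trans h1.symm
          | exact (hsym _ _).trans (h1.trans h2).symm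
    intro a ha b hb a' ha' b' hb' hab hab'
    rw [base a ha b hb hab, base a' ha' b' hb' hab']
  have memlem : ∀ e ∈ E, ∀ a ∈ e, ∀ b ∈ e, a ≠ b → ∀ x ∈ e, C x ∈ col a b := by
    intro e heE a ha b hb hab x hx
    obtain ⟨u, v, w, huv, huw, hvw, heq, h1, h2⟩ := (hE e).1 heE
    have hu : u ∈ e := by rw [heq]; simp
    have hv : v ∈ e := by rw [heq]; simp
    have hcab : col a b = col u v := keylem e heE a ha b hb u hu v hv hab huv
    rw [hcab]
    rw [heq] at hx
    simp only [Finset.mem_insert, Finset.mem_singleton] at hx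
    rcases hx with h | h | h
    · rw [h]; exact (hcol u v huv).2.1
    · rw [h]; exact (hcol u v huv).2.2
    · rw [h, h1]; exact (hcol u w huw).2.2
  have hu₀ : u₀ ∈ e₀ := by rw [he₀eq]; simp
  have hv₀ : v₀ ∈ e₀ := by rw [he₀eq]; simp
  have inv : ∀ e, TightRel E e₀ e → e ∈ E →
      ∀ a ∈ e, ∀ b ∈ e, a ≠ b → col a b = l₀ := by
    intro e hrel
    induction hrel with
    | refl =>
      intro heE a ha b hb hab
      exact keylem e₀ he₀ a ha b hb u₀ hu₀ v₀ hv₀ hab huv₀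
    | tail hlast hstep ih =>
      rename_i f g
      obtain ⟨hfE, hgE, hcard⟩ := hstep
      intro _ a ha b hb hab
      obtain ⟨p, q, hpq, hpqeq⟩ := Finset.card_eq_two.1 hcard
      have hp : p ∈ f ∩ g := by rw [hpqeq]; simp
      have hq : q ∈ f ∩ g := by rw [hpqeq]; simp
      have hpf := (Finset.mem_inter.1 hp).1
      have hpg := (Finset.mem_inter.1 hp).2
      have hqf := (Finset.mem_inter.1 hq).1
      have hqg := (Finset.mem_inter.1 hq).2
      have h₁ : col a b = col p q := keylem g hgE a ha b hb p hpg q hqg hab hpq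
      rw [h₁]
      exact ih hfE p hpf q hqf hpq
  have hl₀L : l₀ ∈ L := (hcol u₀ v₀ huv₀).1
  have hl₀card : l₀.card = r - 1 := by
    have := hP.2.2.1 l₀ hl₀L
    omega
  have hSsub : {x : V | ∃ e ∈ E, TightRel E e₀ e ∧ x ∈ e} ⊆
      ↑(Finset.univ.filter (fun x => C x ∈ l₀)) := by
    rintro x ⟨e, heE, hrel, hx⟩
    simp only [Finset.coe_filter, Finset.mem_univ, true_and, Set.mem_setOf_eq]
    obtain ⟨u, v, w, huv, huw, hvw, heq, h1, h2⟩ := (hE e).1 heE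
    have hu : u ∈ e := by rw [heq]; simp
    have hv : v ∈ e := by rw [heq]; simp
    have hmem := memlem e heE u hu v hv huv x hx
    rwa [inv e hrel heE u hu v hv huv] at hmem
  have hcount : (Finset.univ.filter (fun x => C x ∈ l₀)).card ≤
      (r - 1) * ((Fintype.card V + m - 1) / m) := by
    have hsub : Finset.univ.filter (fun x => C x ∈ l₀) ⊆
        l₀.biUnion (fun i => Finset.univ.filter (fun v => C v = i)) := by
      intro x hx
      simp only [Finset.mem_filter, Finset.mem_univ, true_and] at hx
      simp only [Finset.mem_biUnion, Finset.mem_filter, Finset.mem_univ, true_and]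
      exact ⟨C x, hx, rfl⟩
    calc (Finset.univ.filter (fun x => C x ∈ l₀)).card
        ≤ (l₀.biUnion (fun i => Finset.univ.filter (fun v => C v = i))).card :=
          Finset.card_le_card hsub
      _ ≤ ∑ i ∈ l₀, (Finset.univ.filter (fun v => C v = i)).card :=
          Finset.card_biUnion_le
      _ ≤ ∑ _i ∈ l₀, (Fintype.card V + m - 1) / m :=
          Finset.sum_le_sum (fun i _ => hC i)
      _ = l₀.card * ((Fintype.card V + m - 1) / m) := by
          rw [Finset.sum_const, smul_eq_mul]
      _ = (r - 1) * ((Fintype.card V + m - 1) / m) := by rw [hl₀card]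
  have hmain : {x : V | ∃ e ∈ E, TightRel E e₀ e ∧ x ∈ e}.ncard ≤
      (r - 1) * ((Fintype.card V + m - 1) / m) := by
    calc {x : V | ∃ e ∈ E, TightRel E e₀ e ∧ x ∈ e}.ncard
        ≤ (↑(Finset.univ.filter (fun x => C x ∈ l₀)) : Set V).ncard :=
          Set.ncard_le_ncard hSsub (Finset.finite_toSet _)
      _ = (Finset.univ.filter (fun x => C x ∈ l₀)).card := Set.ncard_coe_finset _
      _ ≤ (r - 1) * ((Fintype.card V + m - 1) / m) := hcount
  refine ⟨hmain, fun hdvd => ?_⟩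
  have hceil : (Fintype.card V + m - 1) / m = Fintype.card V / m := by
    obtain ⟨k, hk⟩ := hdvd
    have h0 : 0 < m := by omega
    rw [hk]
    rw [Nat.add_sub_assoc (by omega : 1 ≤ m), Nat.mul_add_div h0,
      Nat.div_eq_of_lt (by omega), Nat.mul_div_cancel_left _ h0, add_zero]
  rw [hceil] at hmain
  exact hmain
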